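/- A CLF V and CBF h are compatible (i.e., for all x with h(x) ≥ 0 and V(x) ≤ 1 there exists u with Au ≤ c, L_fV(x) + L_gV(x)u ≤ -κ_V(V(x)), and L_fh(x) + L_gh(x)u ≥ -κ_h(h(x))) if and only if the set {(x, z) | h(x) ≥ 0, V(x) ≤ 1, z ≥ 0, zᵀΛ(x) = 0, ξ(x)ᵀz = -1} is empty, where Λ(x) stacks L_gV(x), -L_gh(x), and A, and ξ(x) stacks -κ_V(V(x)) - L_fV(x), κ_h(h(x)) + L_fh(x), and c. -/

import Mathlib

/-!
For each fixed `x`, the constraints on `u` in the compatibility condition are exactly the rows of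
`Λ x *ᵥ u ≤ ξ x`, so the theorem is Farkas' lemma applied pointwise in `x`. Farkas' lemma comes
from separating `(0, -1)` from the cone spanned by the rows of `[M | b]` by a linear functional;
the separation needs that cone to be closed, which follows from Carathéodory's reduction: a
conic combination of linearly dependent vectors can be rewritten without one of them, and the
cone of linearly independent vectors is the image of an orthant under a closed embedding.
-/

open Matrix Finset

def conicCombinations (𝕜 : Type*) {ι E : Type*} [Semiring 𝕜] [PartialOrder 𝕜] [AddCommMonoid E]
    [Module 𝕜 E] (v : ι → E) (s : Finset ι) : Set E :=
  {x | ∃ c : ι → 𝕜, (∀ i ∈ s, 0 ≤ c i) ∧ ∑ i ∈ s, c i • v i = x}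

section ConicCombinations

variable {𝕜 ι E : Type*}

theorem conicCombinations_eq_image [Semiring 𝕜] [PartialOrder 𝕜] [AddCommMonoid E] [Module 𝕜 E]
    (v : ι → E) (s : Finset ι) :
    conicCombinations 𝕜 v s = Fintype.linearCombination 𝕜 (fun i : s => v i) '' {c | 0 ≤ c} := by
  classical
  ext x
  constructor
  · rintro ⟨c, hc, rfl⟩
    exact ⟨fun i => c i, fun i => hc i i.2, Finset.sum_coe_sort s fun i => c i • v i⟩
  · rintro ⟨c, hc, rfl⟩
    refine ⟨fun i => if h : i ∈ s then c ⟨i, h⟩ else 0,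
      fun i hi => by simpa [hi] using hc ⟨i, hi⟩, ?_⟩
    rw [Fintype.linearCombination_apply, ← Finset.sum_coe_sort s]
    simp

theorem conicCombinations_erase_subset [Semiring 𝕜] [PartialOrder 𝕜] [AddCommMonoid E]
    [Module 𝕜 E] [DecidableEq ι] (v : ι → E) (s : Finset ι) (j : ι) :
    conicCombinations 𝕜 v (s.erase j) ⊆ conicCombinations 𝕜 v s := by
  rintro x ⟨c, hc, rfl⟩
  refine ⟨Function.update c j 0, fun i hi => ?_, ?_⟩
  · rcases eq_or_ne i j with rfl | hij
    · rw [Function.update_self]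
    · simpa [hij] using hc i (Finset.mem_erase.2 ⟨hij, hi⟩)
  · rw [← Finset.sum_erase s (a := j) (by rw [Function.update_self, zero_smul])]
    exact Finset.sum_congr rfl fun i hi => by rw [Function.update_of_ne (Finset.ne_of_mem_erase hi)]

variable [Field 𝕜] [LinearOrder 𝕜] [IsStrictOrderedRing 𝕜] [AddCommGroup E] [Module 𝕜 E]

/-- Carathéodory's exchange step: moving `c` along a relation `g` by the largest step that keeps
it nonnegative kills the coefficient attaining `min {c i / g i | g i > 0}`. -/
theorem exists_conicCombination_eq_of_sum_eq_zero {v : ι → E} {s : Finset ι} {g : ι → 𝕜}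
    (hg : ∑ i ∈ s, g i • v i = 0) (hpos : ∃ i ∈ s, 0 < g i) {c : ι → 𝕜}
    (hc : ∀ i ∈ s, 0 ≤ c i) :
    ∃ j ∈ s, ∃ c' : ι → 𝕜, (∀ i ∈ s, 0 ≤ c' i) ∧ c' j = 0 ∧
      ∑ i ∈ s, c' i • v i = ∑ i ∈ s, c i • v i := by
  classical
  have hP : (s.filter fun i => 0 < g i).Nonempty := by simpa [Finset.filter_nonempty_iff] using hpos
  obtain ⟨j, hjP, hj⟩ := (s.filter fun i => 0 < g i).exists_min_image (fun i => c i / g i) hP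
  rw [Finset.mem_filter] at hjP
  set t := c j / g j
  have ht : 0 ≤ t := div_nonneg (hc j hjP.1) hjP.2.le
  refine ⟨j, hjP.1, fun i => c i - t * g i, fun i hi => ?_, ?_, ?_⟩
  · rcases lt_or_ge 0 (g i) with hgi | hgi
    · have := hj i (Finset.mem_filter.2 ⟨hi, hgi⟩)
      rw [le_div_iff₀ hgi] at this
      linarith
    · nlinarith [hc i hi]
  · simp [t, div_mul_cancel₀ _ hjP.2.ne']
  · simp [sub_smul, Finset.sum_sub_distrib, mul_smul, ← Finset.smul_sum, hg]

theorem conicCombinations_subset_biUnion_erase [DecidableEq ι] {v : ι → E} {s : Finset ι}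
    (hv : ¬ LinearIndepOn 𝕜 v s) :
    conicCombinations 𝕜 v s ⊆ ⋃ j ∈ s, conicCombinations 𝕜 v (s.erase j) := by
  rintro x ⟨c, hc, rfl⟩
  obtain ⟨g, hg, i, hi, hgi⟩ := not_linearIndepOn_finset_iff.1 hv
  have hrelation : ∃ g : ι → 𝕜, ∑ i ∈ s, g i • v i = 0 ∧ ∃ i ∈ s, 0 < g i := by
    rcases hgi.lt_or_gt with hneg | hpos
    · exact ⟨-g, by simp [neg_smul, hg], i, hi, neg_pos.2 hneg⟩
    · exact ⟨g, hg, i, hi, hpos⟩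
  obtain ⟨g, hg, hpos⟩ := hrelation
  obtain ⟨j, hj, c', hc', hc'j, hsum⟩ := exists_conicCombination_eq_of_sum_eq_zero hg hpos hc
  refine Set.mem_biUnion hj ⟨c', fun i hi => hc' i (Finset.mem_of_mem_erase hi), ?_⟩
  rw [Finset.sum_erase _ (by simp [hc'j]), hsum]

end ConicCombinations

section Closed

variable {ι E : Type*} [AddCommGroup E] [Module ℝ E] [TopologicalSpace E]
  [IsTopologicalAddGroup E] [ContinuousSMul ℝ E] [T2Space E]

theorem isClosed_conicCombinations_of_linearIndepOn {v : ι → E} {s : Finset ι}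
    (hv : LinearIndepOn ℝ v s) : IsClosed (conicCombinations ℝ v s) := by
  rw [conicCombinations_eq_image]
  have hker : LinearMap.ker (Fintype.linearCombination ℝ (fun i : s => v i)) = ⊥ :=
    LinearMap.ker_eq_bot.2 hv.fintypeLinearCombination_injective
  exact (LinearMap.isClosedEmbedding_of_injective hker).isClosedMap _ isClosed_Ici

theorem isClosed_conicCombinations (v : ι → E) (s : Finset ι) :
    IsClosed (conicCombinations ℝ v s) := by
  classical
  induction s using Finset.strongInduction with
  | H s ih =>
    by_cases hv : LinearIndepOn ℝ v s
    · exact isClosed_conicCombinations_of_linearIndepOn hv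
    · rw [(conicCombinations_subset_biUnion_erase hv).antisymm
        (Set.iUnion₂_subset fun j _ => conicCombinations_erase_subset v s j)]
      exact s.finite_toSet.isClosed_biUnion fun j hj => ih _ (Finset.erase_ssubset hj)

end Closed

section Farkas

variable {ι μ : Type*} [Fintype ι]

theorem image_vecMul_nonneg_eq_conicCombinations (N : Matrix ι μ ℝ) :
    (fun z => z ᵥ* N) '' {z | 0 ≤ z} = conicCombinations ℝ N univ := by
  ext x
  simp [conicCombinations, vecMul_eq_sum, Pi.le_def]

def Matrix.rowCone [Fintype μ] (N : Matrix ι μ ℝ) : ProperCone ℝ (μ → ℝ) where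
  toSubmodule := (PointedCone.positive ℝ (ι → ℝ)).map N.vecMulLinear
  isClosed' := by
    change IsClosed ((fun z => z ᵥ* N) '' {z | 0 ≤ z})
    rw [image_vecMul_nonneg_eq_conicCombinations]
    exact isClosed_conicCombinations _ _

theorem Matrix.mem_rowCone [Fintype μ] {N : Matrix ι μ ℝ} {y : μ → ℝ} :
    y ∈ N.rowCone ↔ ∃ z, 0 ≤ z ∧ z ᵥ* N = y :=
  Iff.rfl

theorem exists_mulVec_nonneg_dotProduct_neg [Fintype μ] (N : Matrix ι μ ℝ) (q : μ → ℝ)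
    (hq : ¬ ∃ z, 0 ≤ z ∧ z ᵥ* N = q) : ∃ w, 0 ≤ N *ᵥ w ∧ q ⬝ᵥ w < 0 := by
  classical
  obtain ⟨f, hfN, hfq⟩ := N.rowCone.hyperplane_separation_point (mt Matrix.mem_rowCone.1 hq)
  set w := (dotProductEquiv ℝ μ).symm f.toLinearMap
  have hf : ∀ y, f y = w ⬝ᵥ y := fun y =>
    (LinearMap.congr_fun ((dotProductEquiv ℝ μ).apply_symm_apply f.toLinearMap) y).symm
  refine ⟨w, fun i => ?_, ?_⟩
  · have hNi : N i ∈ N.rowCone :=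
      Matrix.mem_rowCone.2 ⟨Pi.single i 1, Pi.single_nonneg.2 zero_le_one, single_one_vecMul i N⟩
    simpa [hf, mulVec, dotProduct_comm] using hfN _ hNi
  · rwa [dotProduct_comm, ← hf]

/-- Farkas' lemma for a system of linear inequalities. -/
theorem exists_mulVec_le_iff [Fintype μ] (M : Matrix ι μ ℝ) (b : ι → ℝ) :
    (∃ u, M *ᵥ u ≤ b) ↔ ¬ ∃ z, 0 ≤ z ∧ z ᵥ* M = 0 ∧ b ⬝ᵥ z = -1 := by
  constructor
  · rintro ⟨u, hu⟩ ⟨z, hz, hzM, hbz⟩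
    have : z ⬝ᵥ (M *ᵥ u) ≤ z ⬝ᵥ b := dotProduct_le_dotProduct_of_nonneg_left hu hz
    rw [dotProduct_mulVec, hzM, zero_dotProduct, dotProduct_comm, hbz] at this
    norm_num at this
  · intro hM
    obtain ⟨w, hw, hqw⟩ := exists_mulVec_nonneg_dotProduct_neg (fromCols M (replicateCol Unit b))
      (Sum.elim 0 fun _ => -1) fun ⟨z, hz, hzq⟩ => by
        rw [vecMul_fromCols] at hzq
        exact hM ⟨z, hz, funext fun j => congrFun hzq (Sum.inl j),
          (dotProduct_comm _ _).trans (congrFun hzq (Sum.inr ()))⟩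
    set t := w (Sum.inr ())
    have ht : 0 < t := by simpa [dotProduct, Fintype.sum_sum_type, t] using hqw
    refine ⟨-t⁻¹ • (w ∘ Sum.inl), fun i => ?_⟩
    have hwi : 0 ≤ (M *ᵥ (w ∘ Sum.inl)) i + b i * t := by
      simpa [fromCols_mulVec, mulVec, dotProduct, t] using hw i
    rw [mulVec_smul, Pi.smul_apply, smul_eq_mul, neg_mul, ← div_eq_inv_mul, neg_le,
      le_div_iff₀ ht]
    linarith

end Farkas

theorem sumElim_mulVec_le_sumElim_iff {ι κ : Type*} [Fintype κ] (A : Matrix ι κ ℝ) (c : ι → ℝ)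
    (gV gh : κ → ℝ) (fV fh aV ah : ℝ) (u : κ → ℝ) :
    (Sum.elim ![gV, fun j => -gh j] A : Matrix (Fin 2 ⊕ ι) κ ℝ) *ᵥ u ≤
        Sum.elim ![-aV - fV, ah + fh] c ↔
      A *ᵥ u ≤ c ∧ fV + gV ⬝ᵥ u ≤ -aV ∧ fh + gh ⬝ᵥ u ≥ -ah := by
  have hrows : (Sum.elim ![gV, fun j => -gh j] A : Matrix (Fin 2 ⊕ ι) κ ℝ) *ᵥ u =
      Sum.elim ![gV ⬝ᵥ u, -(gh ⬝ᵥ u)] (A *ᵥ u) := by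
    ext (i | i)
    · fin_cases i
      · rfl
      · exact neg_dotProduct gh u
    · rfl
  rw [hrows, Sum.elim_le_elim_iff, Pi.le_def, Fin.forall_fin_two]
  simp only [cons_val_zero, cons_val_one]
  constructor
  · rintro ⟨⟨hV, hh⟩, hA⟩
    exact ⟨hA, by linarith, by linarith⟩
  · rintro ⟨hA, hV, hh⟩
    exact ⟨⟨by linarith, by linarith⟩, hA⟩

/-- Lemma 2: compatibility of the CLF `V` and CBF `h` is equivalent to
emptiness of the Farkas dual set, where `Λ x` stacks `L_gV x`, `-L_gh x`, `A`
and `ξ x` stacks `-κ_V(V x) - L_fV x`, `κ_h(h x) + L_fh x`, `c`. -/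
theorem compatibility_iff_farkas_set_empty {nx nu p : ℕ}
    (V h : (Fin nx → ℝ) → ℝ) (κV κh : ℝ → ℝ)
    (LfV Lfh : (Fin nx → ℝ) → ℝ) (LgV Lgh : (Fin nx → ℝ) → Fin nu → ℝ)
    (A : Matrix (Fin p) (Fin nu) ℝ) (c : Fin p → ℝ)
    (Λ : (Fin nx → ℝ) → Matrix (Fin 2 ⊕ Fin p) (Fin nu) ℝ)
    (ξ : (Fin nx → ℝ) → (Fin 2 ⊕ Fin p) → ℝ)
    (hΛ : ∀ x, Λ x = Sum.elim ![LgV x, fun j => -Lgh x j] A)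
    (hξ : ∀ x, ξ x = Sum.elim ![-κV (V x) - LfV x, κh (h x) + Lfh x] c) :
    (∀ x : Fin nx → ℝ, h x ≥ 0 → V x ≤ 1 →
      ∃ u : Fin nu → ℝ, (∀ i, A.mulVec u i ≤ c i) ∧
        LfV x + LgV x ⬝ᵥ u ≤ -κV (V x) ∧
        Lfh x + Lgh x ⬝ᵥ u ≥ -κh (h x)) ↔
      ¬ ∃ (x : Fin nx → ℝ) (z : (Fin 2 ⊕ Fin p) → ℝ),
        h x ≥ 0 ∧ V x ≤ 1 ∧ (∀ i, 0 ≤ z i) ∧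
        Matrix.vecMul z (Λ x) = 0 ∧ ξ x ⬝ᵥ z = -1 := by
  have hpointwise : ∀ x, (∃ u : Fin nu → ℝ, (∀ i, A.mulVec u i ≤ c i) ∧
      LfV x + LgV x ⬝ᵥ u ≤ -κV (V x) ∧ Lfh x + Lgh x ⬝ᵥ u ≥ -κh (h x)) ↔
      ¬ ∃ z : (Fin 2 ⊕ Fin p) → ℝ, (∀ i, 0 ≤ z i) ∧ z ᵥ* Λ x = 0 ∧ ξ x ⬝ᵥ z = -1 := fun x => by
    have hfarkas := exists_mulVec_le_iff (Λ x) (ξ x)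
    rw [hΛ, hξ] at hfarkas ⊢
    exact (exists_congr fun u => (sumElim_mulVec_le_sumElim_iff ..).symm).trans hfarkas
  simp only [hpointwise, not_exists, not_and]
  exact ⟨fun H x z hh hV => H x hh hV z, fun H x hh hV z => H x z hh hV⟩
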